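/- The Pack-U rule preserves well-formedness: let σ = ⟨M,G,L, tv₁::⋯::tvₙ::S⟩ be a well-formed state, s ∉ 𝓣 a non-resource type, v = {(fᵢ,tvᵢ) | 1 ≤ i ≤ n} a record value of type s, and suppose each tvᵢ is of the form ⟨vᵢ,U⟩ (a non-resource tagged value). Then the state ⟨M, G, L, ⟨v,U⟩::S⟩ is well-formed. -/

import Mathlib

namespace MoveSem

/-- Tags: either the non-resource tag `U` or a resource tag drawn from `RTag`. -/
inductive MTag (RTag : Type) : Type where
  | U : MTag RTag
  | res : RTag → MTag RTag

/-- Values: primitive values, or record values.  A record value is a non-empty finite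
partial function from field names to tagged values, represented as an association
list (non-emptiness and distinctness of field names are imposed in the
well-formedness predicates below). -/
inductive Val (Prim Fld RTag : Type) : Type where
  | prim : Prim → Val Prim Fld RTag
  | record : List (Fld × (Val Prim Fld RTag × MTag RTag)) → Val Prim Fld RTag

/-- Tagged values: a value paired with a tag. -/
abbrev TVal (Prim Fld RTag : Type) : Type := Val Prim Fld RTag × MTag RTag

variable {Loc Prim Var Fld RTag Ty : Type}

/-- Lookup in an association list (the partial-function reading of a record). -/
def lookupF {α : Type} [DecidableEq Fld] : List (Fld × α) → Fld → Option α
  | [], _ => none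
  | (g, a) :: rest, f => if g = f then some a else lookupF rest f

/-- The subterm `tv[p]` of a tagged value located at path `p`. -/
def subTV [DecidableEq Fld] : TVal Prim Fld RTag → List Fld → Option (TVal Prim Fld RTag)
  | tv, [] => some tv
  | (Val.record flds, _), f :: p =>
    match lookupF flds f with
    | some tv' => subTV tv' p
    | none => none
  | (Val.prim _, _), _ :: _ => none

/-- The replacement `tv[p := tv']` of the subterm at path `p` by `tv'`. -/
def setSubTV [DecidableEq Fld] : TVal Prim Fld RTag → List Fld → TVal Prim Fld RTag →
    Option (TVal Prim Fld RTag)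
  | _, [], tv' => some tv'
  | (Val.record flds, t), f :: p, tv' =>
    match lookupF flds f with
    | some tvf =>
      match setSubTV tvf p tv' with
      | some tvf' =>
        some (Val.record (flds.map fun ft => if ft.1 = f then (ft.1, tvf') else ft), t)
      | none => none
    | none => none
  | (Val.prim _, _), _ :: _, _ => none

/-- A tagged value is a *resource* when the type of its value is a resource type. -/
def IsRes (typeOf : Val Prim Fld RTag → Ty) (ResTy : Set Ty) (tv : TVal Prim Fld RTag) : Prop :=
  typeOf tv.1 ∈ ResTy

/-- Well-formed tagged values: the tag is a resource tag iff the type is a resource type,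
and either the value is primitive, or it is a (non-empty, duplicate-free) record value all
of whose field values are well-formed and, in case the type is not a resource type, none of
whose field values is a resource. -/
inductive WFTV (typeOf : Val Prim Fld RTag → Ty) (ResTy : Set Ty) :
    TVal Prim Fld RTag → Prop where
  | prim (p : Prim) (t : MTag RTag)
      (hiff : typeOf (Val.prim p) ∈ ResTy ↔ t ≠ MTag.U) :
      WFTV typeOf ResTy (Val.prim p, t)
  | record (flds : List (Fld × TVal Prim Fld RTag)) (t : MTag RTag)
      (hne : flds ≠ [])
      (hnodup : (flds.map Prod.fst).Nodup)
      (hwf : ∀ f tv, (f, tv) ∈ flds → WFTV typeOf ResTy tv)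
      (hiff : typeOf (Val.record flds) ∈ ResTy ↔ t ≠ MTag.U)
      (hnores : typeOf (Val.record flds) ∉ ResTy →
        ∀ f tv, (f, tv) ∈ flds → ¬ IsRes typeOf ResTy tv) :
      WFTV typeOf ResTy (Val.record flds, t)

/-- References: a location, a path, and a mutability qualifier (`true` = mut). -/
structure MRef (Loc Fld : Type) : Type where
  loc : Loc
  path : List Fld
  mutq : Bool

/-- Stack values: tagged values, references, or (for `Branch`) locations. -/
abbrev SVal (Loc Prim Fld RTag : Type) : Type :=
  TVal Prim Fld RTag ⊕ (MRef Loc Fld ⊕ Loc)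

def SV.tv (tv : TVal Prim Fld RTag) : SVal Loc Prim Fld RTag := Sum.inl tv
def SV.ref (r : MRef Loc Fld) : SVal Loc Prim Fld RTag := Sum.inr (Sum.inl r)
def SV.loc (c : Loc) : SVal Loc Prim Fld RTag := Sum.inr (Sum.inr c)

/-- States: a memory, a global store, a local map, and an operand stack. -/
structure MState (Loc Prim Var Fld RTag Ty : Type) : Type where
  M : Loc → Option (TVal Prim Fld RTag)
  G : Prim × Ty → Option Loc
  L : Var → Option (Loc ⊕ MRef Loc Fld)
  S : List (SVal Loc Prim Fld RTag)

/-- Update (or delete, with `b = none`) a binding of a partial map. -/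
def upd {α β : Type} [DecidableEq α] (f : α → Option β) (a : α) (b : Option β) :
    α → Option β :=
  fun x => if x = a then b else f x

/-- Globally consistent states. -/
structure GloballyConsistent (typeOf : Val Prim Fld RTag → Ty) (ResTy : Set Ty)
    (σ : MState Loc Prim Var Fld RTag Ty) : Prop where
  wf_mem : ∀ c tv, σ.M c = some tv → WFTV typeOf ResTy tv
  wf_stack : ∀ tv, SV.tv tv ∈ σ.S → WFTV typeOf ResTy tv
  dom_eq : ∀ c, (∃ tv, σ.M c = some tv) ↔
    ((∃ g, σ.G g = some c) ∨ (∃ x, σ.L x = some (Sum.inl c)))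
  glob_ty : ∀ a s c, σ.G (a, s) = some c → ∃ v t, σ.M c = some (v, t) ∧ typeOf v = s

/-- Tag-consistent states: each resource tag occurs at most once among subterms of
memory values and stack entries. -/
structure TagConsistent [DecidableEq Fld] (σ : MState Loc Prim Var Fld RTag Ty) : Prop where
  mem_mem : ∀ c₁ c₂ tv₁ tv₂ p₁ p₂ v₁ v₂ t, σ.M c₁ = some tv₁ → σ.M c₂ = some tv₂ →
    subTV tv₁ p₁ = some (v₁, MTag.res t) → subTV tv₂ p₂ = some (v₂, MTag.res t) →
    c₁ = c₂ ∧ p₁ = p₂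
  stack_stack : ∀ (i₁ i₂ : ℕ) tv₁ tv₂ p₁ p₂ v₁ v₂ t,
    σ.S[i₁]? = some (SV.tv tv₁) → σ.S[i₂]? = some (SV.tv tv₂) →
    subTV tv₁ p₁ = some (v₁, MTag.res t) → subTV tv₂ p₂ = some (v₂, MTag.res t) →
    i₁ = i₂ ∧ p₁ = p₂
  mem_stack : ∀ c tv (i : ℕ) tv' p₁ p₂ v₁ v₂ t, σ.M c = some tv → σ.S[i]? = some (SV.tv tv') →
    subTV tv p₁ = some (v₁, MTag.res t) → subTV tv' p₂ = some (v₂, MTag.res t) → False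

/-- Non-aliasing states. -/
structure NonAliasing (σ : MState Loc Prim Var Fld RTag Ty) : Prop where
  locals : ∀ x₁ x₂ c, x₁ ≠ x₂ → σ.L x₁ = some (Sum.inl c) → σ.L x₂ = some (Sum.inl c) → False
  globals : ∀ g₁ g₂ c, g₁ ≠ g₂ → σ.G g₁ = some c → σ.G g₂ = some c → False
  glob_loc : ∀ g x c, σ.G g = some c → σ.L x = some (Sum.inl c) → False

/-- Well-formed states. -/
structure WFState [DecidableEq Fld] (typeOf : Val Prim Fld RTag → Ty) (ResTy : Set Ty)
    (σ : MState Loc Prim Var Fld RTag Ty) : Prop where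
  gc : GloballyConsistent typeOf ResTy σ
  tc : TagConsistent σ
  na : NonAliasing σ

/-- The resource tags of a state: tags occurring on some subterm of a value in the
image of the memory or of a tagged value on the stack. -/
def resources [DecidableEq Fld] (σ : MState Loc Prim Var Fld RTag Ty) : Set RTag :=
  { t | (∃ c tv p v, σ.M c = some tv ∧ subTV tv p = some (v, MTag.res t)) ∨
        (∃ tv, SV.tv tv ∈ σ.S ∧ ∃ p v, subTV tv p = some (v, MTag.res t)) }

theorem lookupF_mem {α : Type} [DecidableEq Fld] :
    ∀ {l : List (Fld × α)} {f : Fld} {a : α}, lookupF l f = some a → (f, a) ∈ l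
  | [], _, _, h => by simp [lookupF] at h
  | (g, b) :: rest, f, a, h => by
    unfold lookupF at h
    by_cases hg : g = f
    · simp [hg] at h; subst hg; subst h; exact List.mem_cons_self
    · simp [hg] at h; exact List.mem_cons_of_mem _ (lookupF_mem h)

theorem wftv_iff {typeOf : Val Prim Fld RTag → Ty} {ResTy : Set Ty}
    {tv : TVal Prim Fld RTag} (h : WFTV typeOf ResTy tv) :
    typeOf tv.1 ∈ ResTy ↔ tv.2 ≠ MTag.U := by
  cases h with
  | prim p t hiff => exact hiff
  | record flds t _ _ _ hiff _ => exact hiff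

theorem no_res [DecidableEq Fld] {typeOf : Val Prim Fld RTag → Ty} {ResTy : Set Ty}
    {tv : TVal Prim Fld RTag} (h : WFTV typeOf ResTy tv) :
    ∀ p v t, tv.2 = MTag.U → subTV tv p ≠ some (v, MTag.res t) := by
  induction h with
  | prim q t hiff =>
    intro p v t' hU hsub
    cases p with
    | nil => simp [subTV] at hsub; simp at hU; rw [hU] at hsub; exact absurd hsub.2 (by simp)
    | cons f p' => simp [subTV] at hsub
  | record flds t hne hnodup hwf hiff hnores ih =>
    intro p v t' hU hsub
    simp at hU; subst hU
    cases p with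
    | nil => simp [subTV] at hsub
    | cons f p' =>
      unfold subTV at hsub
      cases hlk : lookupF flds f with
      | none => rw [hlk] at hsub; simp at hsub
      | some tv' =>
        rw [hlk] at hsub
        have hmem := lookupF_mem hlk
        have hwf' := hwf f tv' hmem
        have hnr := hnores (by rw [hiff]; simp) f tv' hmem
        have hU' : tv'.2 = MTag.U := by
          by_contra hc
          exact hnr ((wftv_iff hwf').mpr hc)
        exact ih f tv' hmem p' v t' hU' hsub

/-- The `Pack-U` rule preserves well-formedness. -/
theorem pack_u_preserves_wf {Loc Prim Var Fld RTag Ty : Type}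
    [DecidableEq Loc] [DecidableEq Prim] [DecidableEq Var] [DecidableEq Fld] [DecidableEq Ty]
    [Countable Loc] [Countable Prim] [Countable Var] [Countable RTag] [Finite Fld]
    (typeOf : Val Prim Fld RTag → Ty) (ResTy : Set Ty)
    (M : Loc → Option (TVal Prim Fld RTag)) (G : Prim × Ty → Option Loc)
    (L : Var → Option (Loc ⊕ MRef Loc Fld)) (S : List (SVal Loc Prim Fld RTag))
    (s : Ty) (flds : List (Fld × TVal Prim Fld RTag))
    (hwf : WFState typeOf ResTy (MState.mk M G L ((flds.map fun ft => SV.tv ft.2) ++ S)))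
    (hs : s ∉ ResTy) (hty : typeOf (Val.record flds) = s)
    (hne : flds ≠ []) (hnodup : (flds.map Prod.fst).Nodup)
    -- every popped field value is a non-resource (U-tagged) tagged value:
    (hU : ∀ f v tg, (f, (v, tg)) ∈ flds → tg = MTag.U) :
    WFState typeOf ResTy (MState.mk M G L (SV.tv (Val.record flds, MTag.U) :: S)) := by
  obtain ⟨gc, tc, na⟩ := hwf
  set S₀ := (flds.map fun ft => SV.tv ft.2) ++ S with hS₀
  set N := (flds.map fun ft => (SV.tv ft.2 : SVal Loc Prim Fld RTag)).length with hN
  -- each field value is well-formed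
  have hwfflds : ∀ f tv, (f, tv) ∈ flds → WFTV typeOf ResTy tv := by
    intro f tv hmem
    apply gc.wf_stack tv
    exact List.mem_append_left _ (List.mem_map.mpr ⟨(f, tv), hmem, rfl⟩)
  have hUflds : ∀ f tv, (f, tv) ∈ flds → tv.2 = MTag.U := by
    rintro f ⟨v, tg⟩ hmem; exact hU f v tg hmem
  -- the packed record is well-formed
  have headWF : WFTV typeOf ResTy ((Val.record flds : Val Prim Fld RTag), MTag.U) := by
    refine WFTV.record flds MTag.U hne hnodup hwfflds ?_ ?_
    · constructor
      · intro h; exact absurd (hty ▸ h) hs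
      · intro h; exact absurd rfl h
    · intro _ f tv hmem hres
      have := (wftv_iff (hwfflds f tv hmem)).mp hres
      exact this (hUflds f tv hmem)
  have hheadnr : ∀ p v t, subTV ((Val.record flds : Val Prim Fld RTag), MTag.U) p
      ≠ some (v, MTag.res t) := fun p v t => no_res headWF p v t rfl
  -- shifting indices from the new stack to the old stack
  have hshift : ∀ (j : ℕ) (sv : SVal Loc Prim Fld RTag),
      S[j]? = some sv → S₀[N + j]? = some sv := by
    intro j sv hj
    rw [hS₀, List.getElem?_append_right (Nat.le_add_right N j), Nat.add_sub_cancel_left]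
    exact hj
  refine ⟨⟨?_, ?_, gc.dom_eq, gc.glob_ty⟩, ⟨tc.mem_mem, ?_, ?_⟩,
    ⟨na.locals, na.globals, na.glob_loc⟩⟩
  · exact gc.wf_mem
  · intro tv hmem
    rcases List.mem_cons.mp hmem with h | h
    · have : tv = ((Val.record flds : Val Prim Fld RTag), MTag.U) :=
        Sum.inl.inj h
      rw [this]; exact headWF
    · exact gc.wf_stack tv (List.mem_append_right _ h)
  · -- stack_stack
    intro i₁ i₂ tv₁ tv₂ p₁ p₂ v₁ v₂ t h1 h2 hs1 hs2
    match i₁, h1 with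
    | 0, h1 =>
      simp only [List.getElem?_cons_zero, Option.some.injEq] at h1
      have : tv₁ = ((Val.record flds : Val Prim Fld RTag), MTag.U) := Sum.inl.inj h1.symm
      exact absurd hs1 (this ▸ hheadnr p₁ v₁ t)
    | (j₁ + 1), h1 =>
      match i₂, h2 with
      | 0, h2 =>
        simp only [List.getElem?_cons_zero, Option.some.injEq] at h2
        have : tv₂ = ((Val.record flds : Val Prim Fld RTag), MTag.U) := Sum.inl.inj h2.symm
        exact absurd hs2 (this ▸ hheadnr p₂ v₂ t)
      | (j₂ + 1), h2 =>
        simp only [List.getElem?_cons_succ] at h1 h2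
        have := tc.stack_stack (N + j₁) (N + j₂) tv₁ tv₂ p₁ p₂ v₁ v₂ t
          (hshift j₁ _ h1) (hshift j₂ _ h2) hs1 hs2
        exact ⟨by omega, this.2⟩
  · -- mem_stack
    intro c tv i tv' p₁ p₂ v₁ v₂ t hc hi hs1 hs2
    match i, hi with
    | 0, hi =>
      simp only [List.getElem?_cons_zero, Option.some.injEq] at hi
      have : tv' = ((Val.record flds : Val Prim Fld RTag), MTag.U) := Sum.inl.inj hi.symm
      exact absurd hs2 (this ▸ hheadnr p₂ v₂ t)
    | (j + 1), hi =>
      simp only [List.getElem?_cons_succ] at hi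
      exact tc.mem_stack c tv (N + j) tv' p₁ p₂ v₁ v₂ t hc (hshift j _ hi) hs1 hs2

end MoveSem
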